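/- The function κ ↦ κ I₁(κ)/I₀(κ) − log I₀(κ) is strictly increasing on (0, ∞), with derivative κ · d/dκ (I₁(κ)/I₀(κ)) = κ[(I₀(κ) + I₂(κ))/(2 I₀(κ)) − I₁(κ)²/I₀(κ)²]. -/

import Mathlib

/-!
`2π I₀` is the moment generating function of `cos` under Lebesgue measure on `[0, 2π]`, so
`K = log (2π I₀)` is its cumulant generating function, with `K' = I₁ / I₀` and
`K'' = (I₀ + I₂) / (2 I₀) - (I₁ / I₀)²`, the variance of `cos` under the tilted measure; it is
positive because `cos` is not constant. The function in question is `κ K'(κ) - K(κ) + log (2π)`,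
whose derivative is `κ K''(κ)`.
-/

open Real MeasureTheory

noncomputable def besselI0 (κ : ℝ) : ℝ :=
  (1 / (2 * Real.pi)) * ∫ t in (0:ℝ)..(2 * Real.pi), Real.exp (κ * Real.cos t)

noncomputable def besselI1 (κ : ℝ) : ℝ :=
  (1 / (2 * Real.pi)) * ∫ t in (0:ℝ)..(2 * Real.pi), Real.cos t * Real.exp (κ * Real.cos t)

noncomputable def besselI2 (κ : ℝ) : ℝ :=
  (1 / (2 * Real.pi)) * ∫ t in (0:ℝ)..(2 * Real.pi), Real.cos (2 * t) * Real.exp (κ * Real.cos t)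

open ProbabilityTheory Set

lemma Continuous.integrableExpSet_restrict_Ioc {X : ℝ → ℝ} (hX : Continuous X) (a b : ℝ) :
    integrableExpSet X (volume.restrict (Ioc a b)) = univ :=
  eq_univ_of_forall fun _ => (continuous_exp.comp (continuous_const.mul hX)).integrableOn_Ioc

lemma Continuous.mgf_restrict_Ioc_pos {X : ℝ → ℝ} (hX : Continuous X) {a b : ℝ} (hab : a < b)
    (t : ℝ) : 0 < mgf X (volume.restrict (Ioc a b)) t :=
  mgf_pos' (by simp [Measure.restrict_eq_zero, hab])
    (integrable_of_mem_integrableExpSet (by simp [hX.integrableExpSet_restrict_Ioc]))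

lemma Continuous.iteratedDeriv_two_cgf_restrict_Ioc_pos {X : ℝ → ℝ} (hX : Continuous X)
    {a b x y : ℝ} (hab : a < b) (hx : x ∈ Icc a b) (hy : y ∈ Icc a b) (hxy : X x ≠ X y)
    (t : ℝ) : 0 < iteratedDeriv 2 (cgf X (volume.restrict (Ioc a b))) t := by
  rw [iteratedDeriv_two_cgf_eq_integral (by simp [hX.integrableExpSet_restrict_Ioc])]
  refine div_pos ?_ (hX.mgf_restrict_Ioc_pos hab t)
  set m := deriv (cgf X (volume.restrict (Ioc a b))) t
  obtain ⟨c, hc, hcm⟩ : ∃ c ∈ Icc a b, X c ≠ m := by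
    by_cases hxm : X x = m
    · exact ⟨y, hy, hxm ▸ hxy.symm⟩
    · exact ⟨x, hx, hxm⟩
  rw [← intervalIntegral.integral_of_le hab.le]
  exact intervalIntegral.integral_pos hab (by fun_prop) (fun _ _ => by positivity)
    ⟨c, hc, by have := sub_ne_zero.mpr hcm; positivity⟩

lemma AnalyticAt.hasDerivAt_mul_deriv_sub {φ : ℝ → ℝ} {x : ℝ} (hφ : AnalyticAt ℝ φ x) :
    HasDerivAt (fun y => y * deriv φ y - φ y) (x * iteratedDeriv 2 φ x) x := by
  have hφ' : HasDerivAt (deriv φ) (iteratedDeriv 2 φ x) x := by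
    rw [iteratedDeriv_succ, iteratedDeriv_one]
    exact hφ.deriv.differentiableAt.hasDerivAt
  exact (((hasDerivAt_id' x).mul hφ').sub hφ.differentiableAt.hasDerivAt).congr_deriv (by ring)

noncomputable abbrev periodVolume : Measure ℝ := volume.restrict (Ioc 0 (2 * π))

lemma integral_periodVolume (f : ℝ → ℝ) :
    ∫ t, f t ∂periodVolume = ∫ t in (0 : ℝ)..(2 * π), f t :=
  (intervalIntegral.integral_of_le two_pi_pos.le).symm

lemma mgf_cos_periodVolume (κ : ℝ) : mgf cos periodVolume κ = 2 * π * besselI0 κ := by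
  rw [mgf, integral_periodVolume, besselI0, ← mul_assoc, mul_one_div_cancel two_pi_pos.ne',
    one_mul]

lemma integral_cos_mul_exp_periodVolume (κ : ℝ) :
    ∫ t, cos t * exp (κ * cos t) ∂periodVolume = 2 * π * besselI1 κ := by
  rw [integral_periodVolume, besselI1, ← mul_assoc, mul_one_div_cancel two_pi_pos.ne', one_mul]

lemma integral_cos_sq_mul_exp_periodVolume (κ : ℝ) :
    ∫ t, cos t ^ 2 * exp (κ * cos t) ∂periodVolume = π * (besselI0 κ + besselI2 κ) := by
  have hsplit : ∀ t, cos t ^ 2 * exp (κ * cos t)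
      = 2⁻¹ * exp (κ * cos t) + 2⁻¹ * (cos (2 * t) * exp (κ * cos t)) := fun t => by
    rw [cos_sq]; ring
  simp_rw [integral_periodVolume, hsplit]
  rw [intervalIntegral.integral_add (Continuous.intervalIntegrable (by fun_prop) _ _)
      (Continuous.intervalIntegrable (by fun_prop) _ _),
    intervalIntegral.integral_const_mul, intervalIntegral.integral_const_mul, besselI0, besselI2]
  field_simp

lemma besselI0_pos (κ : ℝ) : 0 < besselI0 κ := by
  have := continuous_cos.mgf_restrict_Ioc_pos two_pi_pos κ
  rw [mgf_cos_periodVolume] at this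
  exact pos_of_mul_pos_right this (by positivity)

lemma mem_interior_integrableExpSet_cos (κ : ℝ) :
    κ ∈ interior (integrableExpSet cos periodVolume) := by
  simp [continuous_cos.integrableExpSet_restrict_Ioc]

lemma cgf_cos_periodVolume (κ : ℝ) :
    cgf cos periodVolume κ = log (besselI0 κ) + log (2 * π) := by
  rw [cgf, mgf_cos_periodVolume, log_mul (by positivity) (besselI0_pos κ).ne']
  ring

lemma deriv_cgf_cos_periodVolume (κ : ℝ) :
    deriv (cgf cos periodVolume) κ = besselI1 κ / besselI0 κ := by
  rw [deriv_cgf (mem_interior_integrableExpSet_cos κ), integral_cos_mul_exp_periodVolume,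
    mgf_cos_periodVolume]
  field_simp

lemma iteratedDeriv_two_cgf_cos_periodVolume (κ : ℝ) :
    iteratedDeriv 2 (cgf cos periodVolume) κ
      = (besselI0 κ + besselI2 κ) / (2 * besselI0 κ) - besselI1 κ ^ 2 / besselI0 κ ^ 2 := by
  rw [iteratedDeriv_two_cgf (mem_interior_integrableExpSet_cos κ),
    integral_cos_sq_mul_exp_periodVolume, mgf_cos_periodVolume, deriv_cgf_cos_periodVolume]
  field_simp

theorem vonMises_KLD_strictMono :
    StrictMonoOn (fun κ => κ * besselI1 κ / besselI0 κ - Real.log (besselI0 κ))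
      (Set.Ioi (0:ℝ)) ∧
    ∀ κ ∈ Set.Ioi (0:ℝ),
      HasDerivAt (fun κ => κ * besselI1 κ / besselI0 κ - Real.log (besselI0 κ))
        (κ * ((besselI0 κ + besselI2 κ) / (2 * besselI0 κ)
          - (besselI1 κ)^2 / (besselI0 κ)^2)) κ := by
  have hf : (fun κ => κ * besselI1 κ / besselI0 κ - log (besselI0 κ))
      = fun κ =>
        κ * deriv (cgf cos periodVolume) κ - cgf cos periodVolume κ + log (2 * π) := by
    funext κ
    rw [deriv_cgf_cos_periodVolume, cgf_cos_periodVolume]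
    ring
  have hderiv (κ : ℝ) : HasDerivAt (fun κ => κ * besselI1 κ / besselI0 κ - log (besselI0 κ))
      (κ * iteratedDeriv 2 (cgf cos periodVolume) κ) κ :=
    hf ▸ ((analyticOnNhd_cgf κ (mem_interior_integrableExpSet_cos κ)).hasDerivAt_mul_deriv_sub
      |>.add_const _)
  have hvar_pos (κ : ℝ) : 0 < iteratedDeriv 2 (cgf cos periodVolume) κ :=
    continuous_cos.iteratedDeriv_two_cgf_restrict_Ioc_pos two_pi_pos (x := 0) (y := π)
      ⟨le_rfl, two_pi_pos.le⟩ ⟨pi_pos.le, by linarith [pi_pos]⟩ (by norm_num) κ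
  refine ⟨strictMonoOn_of_hasDerivWithinAt_pos (convex_Ioi 0)
    (fun κ _ => (hderiv κ).continuousAt.continuousWithinAt)
    (fun κ _ => (hderiv κ).hasDerivWithinAt)
    (fun κ hκ => mul_pos (interior_subset hκ) (hvar_pos κ)), fun κ _ => ?_⟩
  simpa only [iteratedDeriv_two_cgf_cos_periodVolume] using hderiv κ
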